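/- In the Lorentz model, the Busemann coordinate equals the negative signed coordinate of the horospherical projection: for every x ∈ L^d and unit tangent vector v at x⁰, t^v(P̃^v(x)) = −B_v(x), where t^v(y) = sign(⟨y, v⟩)·d_L(y, x⁰), P̃^v is the horospherical projection onto the geodesic span(x⁰,v) ∩ L^d, and B_v(x) = log(−⟨x, x⁰+v⟩_L). -/

import Mathlib

open MeasureTheory

noncomputable def arcosh (x : ℝ) : ℝ := Real.log (x + Real.sqrt (x^2 - 1))

noncomputable def mink (d : ℕ) (x y : Fin (d+1) → ℝ) : ℝ :=
  -(x 0 * y 0) + ∑ i : Fin d, x i.succ * y i.succ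

def LorentzSet (d : ℕ) : Set (Fin (d+1) → ℝ) :=
  {x | mink d x x = -1 ∧ 0 < x 0}

noncomputable def dL (d : ℕ) (x y : Fin (d+1) → ℝ) : ℝ :=
  arcosh (-(mink d x y))

noncomputable def lorOrigin (d : ℕ) : Fin (d+1) → ℝ := fun i => if i = 0 then 1 else 0

/-- Signed coordinate on a geodesic through the origin. -/
noncomputable def tL (d : ℕ) (v x : Fin (d+1) → ℝ) : ℝ :=
  Real.sign (∑ i, x i * v i) * dL d x (lorOrigin d)

/-- Horospherical projection in the Lorentz model. -/
noncomputable def PtL (d : ℕ) (v y : Fin (d+1) → ℝ) : Fin (d+1) → ℝ := fun i =>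
  -(1 / (2 * mink d y (fun j => lorOrigin d j + v j))) *
    ((1 + (mink d y (fun j => lorOrigin d j + v j))^2) * lorOrigin d i +
      (1 - (mink d y (fun j => lorOrigin d j + v j))^2) * v i)

/-- The Busemann function in the Lorentz model. -/
noncomputable def BL (d : ℕ) (v x : Fin (d+1) → ℝ) : ℝ :=
  Real.log (-(mink d x (fun i => lorOrigin d i + v i)))

lemma key_lemma (s : ℝ) (hs : 0 < s) :
    Real.sign ((1 - s^2)/(2*s)) * arcosh ((1+s^2)/(2*s)) = -Real.log s := by
  have h2s : (0:ℝ) < 2*s := by linarith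
  rcases lt_trichotomy s 1 with h1 | h1 | h1
  · have hpos : 0 < (1 - s^2)/(2*s) := by
      apply div_pos; nlinarith; exact h2s
    rw [Real.sign_of_pos hpos, one_mul]
    have hsq : ((1+s^2)/(2*s))^2 - 1 = ((1-s^2)/(2*s))^2 := by
      field_simp; ring
    rw [arcosh, hsq, Real.sqrt_sq hpos.le]
    have : (1+s^2)/(2*s) + (1-s^2)/(2*s) = 1/s := by
      rw [← add_div, div_eq_div_iff h2s.ne' hs.ne']; ring
    rw [this, one_div, Real.log_inv]
  · subst h1
    norm_num [arcosh]
  · have hneg : (1 - s^2)/(2*s) < 0 := by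
      apply div_neg_of_neg_of_pos; nlinarith; exact h2s
    rw [Real.sign_of_neg hneg]
    have hsq : ((1+s^2)/(2*s))^2 - 1 = ((s^2-1)/(2*s))^2 := by
      field_simp; ring
    have hpos2 : 0 ≤ (s^2-1)/(2*s) := by
      apply div_nonneg; nlinarith; linarith
    rw [arcosh, hsq, Real.sqrt_sq hpos2]
    have : (1+s^2)/(2*s) + (s^2-1)/(2*s) = s := by
      rw [← add_div, div_eq_iff h2s.ne']; ring
    rw [this]; ring

/-- the signed coordinate of the horospherical projection is the
negative Busemann coordinate: `t^v(P̃^v(x)) = −B_v(x)`. -/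
theorem busemann_coordinate_eq_neg_horospherical_coordinate (d : ℕ)
    (v : Fin (d+1) → ℝ) (hv0 : v 0 = 0) (hv : mink d v v = 1)
    (x : Fin (d+1) → ℝ) (hx : x ∈ LorentzSet d) :
    tL d v (PtL d v x) = -(BL d v x) := by
  obtain ⟨hx1, hx0⟩ := hx
  set c : ℝ := mink d x (fun j => lorOrigin d j + v j) with hcdef
  have hosucc : ∀ i : Fin d, lorOrigin d i.succ = 0 := by
    intro i; simp [lorOrigin, Fin.succ_ne_zero]
  have ho0 : lorOrigin d 0 = 1 := by simp [lorOrigin]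
  have hvsum : ∑ i : Fin d, v i.succ ^ 2 = 1 := by
    have := hv
    simp only [mink, hv0] at this
    simp only [sq]; linarith
  have hxsum : ∑ i : Fin d, x i.succ ^ 2 = x 0 ^ 2 - 1 := by
    have := hx1
    simp only [mink] at this
    simp only [sq]; linarith
  have hcval : c = -(x 0) + ∑ i : Fin d, x i.succ * v i.succ := by
    rw [hcdef]
    simp only [mink, ho0, hosucc, hv0, zero_add, add_zero, mul_one]
  have hcneg : c < 0 := by
    have hcs := Finset.sum_mul_sq_le_sq_mul_sq Finset.univ
      (fun i : Fin d => x i.succ) (fun i : Fin d => v i.succ)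
    rw [hxsum, hvsum] at hcs
    nlinarith [hcs, hcval]
  set s : ℝ := -c with hsdef
  have hs : 0 < s := by simpa [hsdef] using hcneg
  have hP : ∀ i, PtL d v x i
      = -(1 / (2 * c)) * ((1 + c^2) * lorOrigin d i + (1 - c^2) * v i) := by
    intro i; rfl
  have hsum : (∑ i, PtL d v x i * v i) = (1 - s^2)/(2*s) := by
    rw [Fin.sum_univ_succ]
    simp only [hP, ho0, hosucc, hv0, mul_zero, zero_add, mul_one, mul_zero, add_zero]
    have h1 : ∑ i : Fin d, -(1 / (2 * c)) * ((1 - c ^ 2) * v i.succ) * v i.succ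
        = -(1 / (2 * c)) * (1 - c ^ 2) * ∑ i : Fin d, v i.succ ^ 2 := by
      rw [Finset.mul_sum]; exact Finset.sum_congr rfl fun i _ => by ring
    rw [h1, hvsum]
    have hc0 : c ≠ 0 := ne_of_lt hcneg
    have hs0 : s ≠ 0 := ne_of_gt hs
    field_simp [hsdef]
    ring
  have hmP : -(mink d (PtL d v x) (lorOrigin d)) = (1 + s^2)/(2*s) := by
    simp only [mink, hP, ho0, hosucc, hv0, mul_zero, mul_one, add_zero, zero_add,
      Finset.sum_const_zero]
    have hc0 : c ≠ 0 := ne_of_lt hcneg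
    field_simp [hsdef]
    ring
  have hBL : BL d v x = Real.log s := by
    rw [BL, ← hcdef, hsdef]
  rw [tL, hsum, dL, hmP, hBL]
  exact key_lemma s hs
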